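/- arXiv:1404.7088 — 4 statements merged into one kernel-verified Lean document; each statement's English description precedes it below -/
import Mathlib

section
/- Let A and B be unital complex C*-algebras, each simple as a ring (its only two-sided ideals are 0 and the whole algebra). Then the algebraic tensor product A ⊗_ℂ B is a simple ring. -/
/-!
A simple complex Banach algebra is central: if `x` is central and `μ` lies in its (nonempty)
spectrum, then `μ - x` is a non-invertible element of the center, which is a field, so `x = μ`.

It remains to see that `A ⊗[K] B` is simple when `A` is central simple and `B` is simple. Write
elements of `A ⊗[K] B` in coordinates in `A` with respect to a `K`-basis of `B`. For `x ≠ 0` in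
an ideal `I`, the coordinates at a fixed index of the elements of `I` supported in the support
of `x` form a nonzero ideal of `A`, so `I` contains such an element `y` with a coordinate equal
to `1`. The commutators of `y` with `A ⊗ 1` then have strictly smaller support than `x`: if one
of them is nonzero, induct on the size of the support. Otherwise `y` lies in the centralizer of
`A ⊗ 1`, which is `Z(A) ⊗ B = 1 ⊗ B`, so `I` meets `1 ⊗ B` in a nonzero element and simplicity
of `B` gives `1 ∈ I`.
-/

/-- The algebraic tensor product `A ⊗[ℂ] B` of two complex algebras, written with the `ℂ`-module
structures coming from the algebra structures (this is the usual algebraic tensor product; being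
explicit about the module structures merely assists instance resolution). -/
noncomputable abbrev AlgTensor (A B : Type*) [Ring A] [Algebra ℂ A] [Ring B] [Algebra ℂ B] :
    Type _ :=
  @TensorProduct ℂ _ A B _ _ Algebra.toModule Algebra.toModule

open TensorProduct Algebra.TensorProduct

theorem IsSimpleRing.isUnit_of_mem_center {A : Type*} [Ring A] [IsSimpleRing A] {x : A}
    (hx : x ∈ Set.center A) (hx0 : x ≠ 0) : IsUnit x := by
  let := (IsSimpleRing.isField_center A).toField
  have : (⟨x, hx⟩ : Subring.center A) ≠ 0 := by simpa [Subtype.ext_iff] using hx0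
  exact (isUnit_iff_ne_zero.mpr this).map (Subring.center A).subtype

instance isCentral_complex_of_isSimpleRing (A : Type*) [NormedRing A] [NormedAlgebra ℂ A]
    [CompleteSpace A] [IsSimpleRing A] : Algebra.IsCentral ℂ A where
  out x hx := by
    obtain ⟨μ, hμ⟩ := spectrum.nonempty x
    have hcenter : algebraMap ℂ A μ - x ∈ Subalgebra.center ℂ A :=
      sub_mem (Subalgebra.algebraMap_mem _ μ) hx
    have : algebraMap ℂ A μ - x = 0 := by
      by_contra h
      exact hμ (IsSimpleRing.isUnit_of_mem_center hcenter h)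
    exact Algebra.mem_bot.2 ⟨μ, sub_eq_zero.mp this⟩

namespace Algebra.TensorProduct

section CommRing

variable {K A B ι : Type*} [CommRing K] [Ring A] [Algebra K A] [Ring B] [Algebra K B]

theorem tmul_one_mul_eq_smul (c : A) (x : A ⊗[K] B) : (c ⊗ₜ[K] (1 : B)) * x = c • x := by
  induction x using TensorProduct.induction_on with
  | zero => simp
  | tmul a m => simp [smul_tmul']
  | add x y hx hy => simp [mul_add, hx, hy]

variable (b : Module.Basis ι K B)

theorem basis_repr_tmul_one_mul (c : A) (x : A ⊗[K] B) :
    (basis A b).repr ((c ⊗ₜ 1) * x) = c • (basis A b).repr x := by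
  rw [tmul_one_mul_eq_smul, map_smul]

theorem basis_repr_mul_tmul_one (x : A ⊗[K] B) (d : A) :
    (basis A b).repr (x * (d ⊗ₜ 1)) = ((basis A b).repr x).mapRange (· * d) (zero_mul d) := by
  induction x using TensorProduct.induction_on with
  | zero => simp
  | tmul a m => ext i; simp [basis_repr_tmul, mul_assoc, Algebra.commutes]
  | add x y hx hy => ext i; simp [add_mul, hx, hy]

theorem support_basis_repr_commutator_ssubset [Nontrivial A] {y : A ⊗[K] B} {i : ι}
    (hy : (basis A b).repr y i = 1) (c : A) :
    ((basis A b).repr ((c ⊗ₜ 1) * y - y * (c ⊗ₜ 1))).support ⊂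
      ((basis A b).repr y).support := by
  have hcoeff : ∀ j, (basis A b).repr ((c ⊗ₜ 1) * y - y * (c ⊗ₜ 1)) j =
      c * (basis A b).repr y j - (basis A b).repr y j * c := by
    simp [basis_repr_tmul_one_mul, basis_repr_mul_tmul_one]
  classical
  have hi : i ∈ ((basis A b).repr y).support := by simp [hy]
  refine LE.le.trans_ssubset (fun j hj => ?_) (Finset.erase_ssubset hi)
  rw [Finsupp.mem_support_iff, hcoeff] at hj
  rw [Finset.mem_erase, Finsupp.mem_support_iff]
  exact ⟨by rintro rfl; simp [hy] at hj, by intro h; simp [h] at hj⟩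

theorem exists_mem_support_subset_basis_repr_eq_one [IsSimpleRing A]
    {I : TwoSidedIdeal (A ⊗[K] B)} {x : A ⊗[K] B} (hx : x ∈ I) {i : ι}
    (hi : (basis A b).repr x i ≠ 0) :
    ∃ y ∈ I, ((basis A b).repr y).support ⊆ ((basis A b).repr x).support ∧
      (basis A b).repr y i = 1 := by
  let s := ((basis A b).repr x).support
  let J : TwoSidedIdeal A := .mk' {a | ∃ y ∈ I, ((basis A b).repr y).support ⊆ s ∧
      (basis A b).repr y i = a}
    ⟨0, I.zero_mem, by simp, by simp⟩
    (by
      rintro _ _ ⟨y, hy, hys, rfl⟩ ⟨z, hz, hzs, rfl⟩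
      refine ⟨y + z, I.add_mem hy hz, ?_, by simp⟩
      classical
      rw [map_add]
      exact Finsupp.support_add.trans (Finset.union_subset hys hzs))
    (by
      rintro _ ⟨y, hy, hys, rfl⟩
      exact ⟨-y, I.neg_mem hy, by simpa using hys, by simp⟩)
    (by
      rintro c _ ⟨y, hy, hys, rfl⟩
      refine ⟨(c ⊗ₜ 1) * y, I.mul_mem_left _ _ hy, ?_, by simp [basis_repr_tmul_one_mul]⟩
      rw [basis_repr_tmul_one_mul]
      exact Finsupp.support_smul.trans hys)
    (by
      rintro _ d ⟨y, hy, hys, rfl⟩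
      refine ⟨y * (d ⊗ₜ 1), I.mul_mem_right _ _ hy, ?_, by simp [basis_repr_mul_tmul_one]⟩
      rw [basis_repr_mul_tmul_one]
      exact Finsupp.support_mapRange.trans hys)
  have hxJ : (basis A b).repr x i ∈ J :=
    (TwoSidedIdeal.mem_mk' _ _ _ _ _ _ _).2 ⟨x, hx, subset_rfl, rfl⟩
  have h1J := IsSimpleRing.one_mem_of_ne_zero_mem J hi hxJ
  rwa [TwoSidedIdeal.mem_mk'] at h1J

end CommRing

section Field

variable {K A B : Type*} [Field K] [Ring A] [Algebra K A] [Ring B] [Algebra K B]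

theorem centralizer_range_includeLeft_eq_range_includeRight [Algebra.IsCentral K A] :
    Subalgebra.centralizer K ((includeLeft : A →ₐ[K] A ⊗[K] B).range : Set (A ⊗[K] B)) =
      (includeRight : B →ₐ[K] A ⊗[K] B).range := by
  rw [Subalgebra.centralizer_coe_range_includeLeft_eq_center_tensorProduct, map_range,
    Algebra.IsCentral.center_eq_bot]
  simp [AlgHom.range_comp, Subalgebra.range_val, Algebra.map_bot]

variable [Algebra.IsCentral K A] [IsSimpleRing A] [IsSimpleRing B]

theorem one_mem_of_ne_zero_mem_of_isCentral (I : TwoSidedIdeal (A ⊗[K] B)) {x : A ⊗[K] B}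
    (hx0 : x ≠ 0) (hx : x ∈ I) : (1 : A ⊗[K] B) ∈ I := by
  let b := Module.Basis.ofVectorSpace K B
  induction hn : ((basis A b).repr x).support.card using Nat.strong_induction_on
    generalizing x with
  | _ n ih =>
  obtain ⟨i, hi⟩ : ((basis A b).repr x).support.Nonempty := by simpa using hx0
  obtain ⟨y, hyI, hys, hyi⟩ :=
    exists_mem_support_subset_basis_repr_eq_one b hx (Finsupp.mem_support_iff.1 hi)
  by_cases hcomm : ∀ c : A, (c ⊗ₜ[K] (1 : B)) * y = y * (c ⊗ₜ 1)
  · have hy : y ∈ (includeRight : B →ₐ[K] A ⊗[K] B).range := by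
      rw [← centralizer_range_includeLeft_eq_range_includeRight, Subalgebra.mem_centralizer_iff]
      rintro _ ⟨c, rfl⟩
      exact hcomm c
    obtain ⟨d, rfl⟩ := hy
    have hd : d ≠ 0 := by rintro rfl; simp at hyi
    have h1 := IsSimpleRing.one_mem_of_ne_zero_mem (TwoSidedIdeal.comap includeRight I) hd
      ((TwoSidedIdeal.mem_comap _).2 hyI)
    simpa [Algebra.TensorProduct.one_def] using (TwoSidedIdeal.mem_comap _).1 h1
  · obtain ⟨c, hc⟩ := not_forall.1 hcomm
    have hzI : (c ⊗ₜ 1) * y - y * (c ⊗ₜ 1) ∈ I :=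
      I.sub_mem (I.mul_mem_left _ _ hyI) (I.mul_mem_right _ _ hyI)
    refine ih _ ?_ (sub_ne_zero.2 hc) hzI rfl
    exact hn ▸ Finset.card_lt_card ((support_basis_repr_commutator_ssubset b hyi c).trans_le hys)

theorem isSimpleRing_of_isCentral : IsSimpleRing (A ⊗[K] B) :=
  .of_eq_bot_or_eq_top fun I => or_iff_not_imp_left.2 fun hI => by
    obtain ⟨x, hxI, hx⟩ := SetLike.exists_of_lt (bot_lt_iff_ne_bot.2 hI)
    have hx0 : x ≠ 0 := by rintro rfl; exact hx (zero_mem _)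
    exact I.one_mem_iff.1 (one_mem_of_ne_zero_mem_of_isCentral I hx0 hxI)

end Field

end Algebra.TensorProduct

/-- If `A` and `B` are unital complex C*-algebras, each simple as a ring,
then the algebraic tensor product `A ⊗[ℂ] B` is a simple ring. -/
theorem isSimpleRing_tensorProduct_of_cstarAlgebras
    (A B : Type*) [CStarAlgebra A] [CStarAlgebra B]
    (hA : IsSimpleRing A) (hB : IsSimpleRing B) :
    IsSimpleRing (AlgTensor A B) := by
  have := hA
  have := hB
  exact Algebra.TensorProduct.isSimpleRing_of_isCentral
end

section
/- Let A and B be unital complex C*-algebras, each simple as a ring, and let f be a C*-seminorm on the algebraic tensor product A ⊗_ℂ B such that f(a ⊗ 1) > 0 for every nonzero a ∈ A and f(1 ⊗ b) > 0 for every nonzero b ∈ B. Then f is a C*-norm, i.e. f(x) > 0 for every nonzero x ∈ A ⊗_ℂ B. -/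
set_option synthInstance.maxHeartbeats 1000000
set_option maxHeartbeats 1000000

open scoped TensorProduct

noncomputable section CStarNormDefs

namespace PaperCStarNorms

variable {A B : Type*} [Ring A] [Algebra ℂ A] [StarRing A] [StarModule ℂ A]
  [Ring B] [Algebra ℂ B] [StarRing B] [StarModule ℂ B]

/-- The canonical involution on the algebraic tensor product `A ⊗[ℂ] B` of two complex
`*`-algebras, determined by `(a ⊗ b)* = a* ⊗ b*`. -/
def tensorStarAux : A ⊗[ℂ] B →+ A ⊗[ℂ] B :=
  TensorProduct.liftAddHom
    (AddMonoidHom.mk'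
      (fun a => AddMonoidHom.mk' (fun b => star a ⊗ₜ[ℂ] star b)
        (fun b₁ b₂ => by simp [star_add, TensorProduct.tmul_add]))
      (fun a₁ a₂ => by
        ext b
        simp [star_add, TensorProduct.add_tmul]))
    (fun c a b => by
      simp [star_smul, TensorProduct.smul_tmul', TensorProduct.tmul_smul])

@[simp] lemma tensorStarAux_tmul (a : A) (b : B) :
    tensorStarAux (a ⊗ₜ[ℂ] b) = star a ⊗ₜ[ℂ] star b :=
  TensorProduct.liftAddHom_tmul _ _ _ _

instance : StarRing (A ⊗[ℂ] B) where
  star := tensorStarAux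
  star_involutive x := by
    show tensorStarAux (tensorStarAux x) = x
    induction x using TensorProduct.induction_on with
    | zero => simp
    | tmul a b => simp
    | add x y hx hy => simp only [map_add, hx, hy]
  star_mul x y := by
    show tensorStarAux (x * y) = tensorStarAux y * tensorStarAux x
    induction x using TensorProduct.induction_on with
    | zero => simp
    | tmul a b =>
      induction y using TensorProduct.induction_on with
      | zero => simp
      | tmul c d => simp [Algebra.TensorProduct.tmul_mul_tmul]
      | add y₁ y₂ h₁ h₂ => rw [mul_add, map_add, h₁, h₂, map_add, add_mul]
    | add x₁ x₂ h₁ h₂ => rw [add_mul, map_add, h₁, h₂, map_add, mul_add]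
  star_add x y := map_add tensorStarAux x y

@[simp] lemma star_tmul (a : A) (b : B) :
    star (a ⊗ₜ[ℂ] b) = star a ⊗ₜ[ℂ] star b := rfl

end PaperCStarNorms

/-- A C*-seminorm on a complex `*`-algebra `A`. -/
def IsCstarSeminorm {A : Type*} [Ring A] [Algebra ℂ A] [StarRing A] (f : A → ℝ) : Prop :=
  (∀ x, 0 ≤ f x) ∧ (∀ x y, f (x + y) ≤ f x + f y) ∧
  (∀ (c : ℂ) (x), f (c • x) = ‖c‖ * f x) ∧ (∀ x y, f (x * y) ≤ f x * f y) ∧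
  (∀ x, f (star x) = f x) ∧ (∀ x, f (star x * x) = f x ^ 2)

/-- A C*-norm on a complex `*`-algebra `A`. -/
def IsCstarNorm {A : Type*} [Ring A] [Algebra ℂ A] [StarRing A] (f : A → ℝ) : Prop :=
  IsCstarSeminorm f ∧ ∀ x, f x = 0 → x = 0

end CStarNormDefs

/-!
The kernel of `f` is a two-sided ideal of `A ⊗ B`, so it suffices that every nonzero ideal
contains some `1 ⊗ b` with `b ≠ 0`. This holds whenever `A` is central simple: for a basis `(eᵢ)`
of `B`, take a nonzero `∑ aᵢ ⊗ eᵢ` in the ideal with as few nonzero coefficients as possible and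
scale one coefficient to `1` using simplicity of `A`. Its commutators with the `u ⊗ 1` have fewer
nonzero coefficients, hence vanish, so it commutes with `A ⊗ 1` and therefore lies in `1 ⊗ B`.
Finally, a simple complex Banach algebra is central: for central `z` and `c` in its spectrum,
`c - z` is a non-invertible central element, hence zero.
-/

theorem IsSimpleRing.isUnit_of_mem_center_s8 {A : Type*} [Ring A] [IsSimpleRing A] {z : A}
    (hz : z ∈ Subring.center A) (hz0 : z ≠ 0) : IsUnit z := by
  obtain ⟨⟨y, hy⟩, hzy⟩ := (IsSimpleRing.isField_center A).mul_inv_cancel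
    (a := ⟨z, hz⟩) (by simpa [Subtype.ext_iff] using hz0)
  have hzy : z * y = 1 := congrArg Subtype.val hzy
  exact ⟨⟨z, y, hzy, (Subring.mem_center_iff.1 hy z).symm.trans hzy⟩, rfl⟩

theorem Algebra.IsCentral.of_isSimpleRing (A : Type*) [NormedRing A] [NormedAlgebra ℂ A]
    [CompleteSpace A] [IsSimpleRing A] : Algebra.IsCentral ℂ A where
  out z hz := by
    obtain ⟨c, hc⟩ := spectrum.nonempty z
    have hcz : algebraMap ℂ A c - z ∈ Subring.center A :=
      sub_mem (Subalgebra.algebraMap_mem (Subalgebra.center ℂ A) c) hz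
    by_contra hzc
    refine hc (IsSimpleRing.isUnit_of_mem_center_s8 hcz (sub_ne_zero.2 fun h => hzc ?_))
    exact h ▸ Subalgebra.algebraMap_mem ⊥ c

namespace Algebra.TensorProduct

theorem exists_one_tmul_eq_of_forall_commute {R A B : Type*}
    [CommSemiring R] [Semiring A] [Algebra R A] [Algebra.IsCentral R A]
    [Semiring B] [Algebra R B] [Module.Free R B] {w : A ⊗[R] B}
    (hw : ∀ a : A, a ⊗ₜ[R] (1 : B) * w = w * a ⊗ₜ[R] (1 : B)) : ∃ b : B, 1 ⊗ₜ[R] b = w := by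
  have hwc : w ∈ Subalgebra.centralizer R (includeLeft : A →ₐ[R] A ⊗[R] B).range := by
    rw [Subalgebra.mem_centralizer_iff]
    rintro _ ⟨a, rfl⟩
    exact hw a
  rw [Subalgebra.centralizer_coe_range_includeLeft_eq_center_tensorProduct, map_range,
    Algebra.IsCentral.center_eq_bot, sup_eq_right.2] at hwc
  · obtain ⟨b, rfl⟩ := hwc
    exact ⟨b, rfl⟩
  · rintro _ ⟨⟨a, ha⟩, rfl⟩
    obtain ⟨r, rfl⟩ := Algebra.mem_bot.1 ha
    exact ⟨algebraMap R B r, by simp [Algebra.algebraMap_eq_smul_one]⟩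

section Coefficients

variable {R A B ι : Type*} [CommSemiring R] [Semiring A] [Algebra R A] [Semiring B] [Algebra R B]
  (e : Module.Basis ι R B)

theorem basis_repr_tmul_one_mul_s8 (u : A) (y : A ⊗[R] B) (i : ι) :
    (basis A e).repr (u ⊗ₜ[R] (1 : B) * y) i = u * (basis A e).repr y i := by
  induction y using TensorProduct.induction_on with
  | zero => simp
  | tmul a b => simp [mul_assoc]
  | add y z hy hz => simp only [mul_add, map_add, Finsupp.add_apply, hy, hz]

theorem basis_repr_mul_tmul_one_s8 (u : A) (y : A ⊗[R] B) (i : ι) :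
    (basis A e).repr (y * u ⊗ₜ[R] (1 : B)) i = (basis A e).repr y i * u := by
  induction y using TensorProduct.induction_on with
  | zero => simp
  | tmul a b => simp [mul_assoc, Algebra.commutes]
  | add y z hy hz => simp only [add_mul, map_add, Finsupp.add_apply, hy, hz]

end Coefficients

end Algebra.TensorProduct

namespace TwoSidedIdeal

open Algebra.TensorProduct

section CoeffIdeal

variable {R A B ι : Type*} [CommSemiring R] [Ring A] [Algebra R A] [Ring B] [Algebra R B]
  (e : Module.Basis ι R B)

def coeffIdeal (I : TwoSidedIdeal (A ⊗[R] B)) (s : Finset ι) (i : ι) : TwoSidedIdeal A :=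
  mk' {a | ∃ y ∈ I, ((basis A e).repr y).support ⊆ s ∧ (basis A e).repr y i = a}
    ⟨0, I.zero_mem, by simp, by simp⟩
    (by
      classical
      rintro _ _ ⟨y, hyI, hys, rfl⟩ ⟨z, hzI, hzs, rfl⟩
      refine ⟨y + z, I.add_mem hyI hzI, ?_, by simp⟩
      rw [map_add]
      exact Finsupp.support_add.trans (Finset.union_subset hys hzs))
    (by
      rintro _ ⟨y, hyI, hys, rfl⟩
      exact ⟨-y, I.neg_mem hyI, by simpa using hys, by simp⟩)
    (by
      rintro u _ ⟨y, hyI, hys, rfl⟩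
      refine ⟨u ⊗ₜ 1 * y, I.mul_mem_left _ _ hyI, fun j hj => hys ?_,
        basis_repr_tmul_one_mul_s8 e u y i⟩
      rw [Finsupp.mem_support_iff, basis_repr_tmul_one_mul_s8] at hj
      exact Finsupp.mem_support_iff.2 (right_ne_zero_of_mul hj))
    (by
      rintro _ u ⟨y, hyI, hys, rfl⟩
      refine ⟨y * u ⊗ₜ 1, I.mul_mem_right _ _ hyI, fun j hj => hys ?_,
        basis_repr_mul_tmul_one_s8 e u y i⟩
      rw [Finsupp.mem_support_iff, basis_repr_mul_tmul_one_s8] at hj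
      exact Finsupp.mem_support_iff.2 (left_ne_zero_of_mul hj))

theorem mem_coeffIdeal {I : TwoSidedIdeal (A ⊗[R] B)} {s : Finset ι} {i : ι} {a : A} :
    a ∈ coeffIdeal e I s i ↔
      ∃ y ∈ I, ((basis A e).repr y).support ⊆ s ∧ (basis A e).repr y i = a :=
  mem_mk' _ _ _ _ _ _ a

end CoeffIdeal

theorem exists_one_tmul_mem {R A B : Type*} [CommRing R] [Ring A] [Algebra R A] [IsSimpleRing A]
    [Algebra.IsCentral R A] [Ring B] [Algebra R B] [Module.Free R B]
    (I : TwoSidedIdeal (A ⊗[R] B)) {x : A ⊗[R] B} (hxI : x ∈ I) (hx : x ≠ 0) :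
    ∃ b : B, b ≠ 0 ∧ 1 ⊗ₜ[R] b ∈ I := by
  let e := Module.Free.chooseBasis R B
  suffices ∀ (s : Finset _) (y : A ⊗[R] B), y ∈ I → y ≠ 0 → ((basis A e).repr y).support ⊆ s →
      ∃ b : B, b ≠ 0 ∧ 1 ⊗ₜ[R] b ∈ I from this _ x hxI hx subset_rfl
  intro s
  induction s using Finset.strongInduction with | H s ih =>
  intro y hyI hy hys
  obtain ⟨i₀, hi₀⟩ : ((basis A e).repr y).support.Nonempty := by simpa using hy
  have h1 : (1 : A) ∈ coeffIdeal e I s i₀ := IsSimpleRing.one_mem_of_ne_zero_mem _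
    (Finsupp.mem_support_iff.1 hi₀) ((mem_coeffIdeal e).2 ⟨y, hyI, hys, rfl⟩)
  obtain ⟨y', hy'I, hy's, hy'i₀⟩ := (mem_coeffIdeal e).1 h1
  by_cases hcomm : ∀ u : A, u ⊗ₜ[R] (1 : B) * y' = y' * u ⊗ₜ[R] (1 : B)
  · obtain ⟨b, rfl⟩ := exists_one_tmul_eq_of_forall_commute hcomm
    refine ⟨b, ?_, hy'I⟩
    rintro rfl
    simp at hy'i₀
  push Not at hcomm
  obtain ⟨u, hu⟩ := hcomm
  -- the commutator with `u ⊗ 1` kills the coefficient `1` at `i₀`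
  have hsupp : ((basis A e).repr (u ⊗ₜ 1 * y' - y' * u ⊗ₜ 1)).support ⊆ s.erase i₀ := by
    intro i hi
    rw [Finsupp.mem_support_iff, map_sub, Finsupp.sub_apply, basis_repr_tmul_one_mul_s8,
      basis_repr_mul_tmul_one_s8] at hi
    refine Finset.mem_erase.2 ⟨?_, hy's (Finsupp.mem_support_iff.2 ?_)⟩
    · rintro rfl
      simp [hy'i₀] at hi
    · rintro h
      simp [h] at hi
  exact ih _ (Finset.erase_ssubset (hys hi₀)) _
    (I.sub_mem (I.mul_mem_left _ _ hy'I) (I.mul_mem_right _ _ hy'I)) (sub_ne_zero.2 hu) hsupp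

end TwoSidedIdeal

namespace IsCstarSeminorm

variable {R : Type*} [Ring R] [Algebra ℂ R] [StarRing R] {f : R → ℝ}

def ker (hf : IsCstarSeminorm f) : TwoSidedIdeal R :=
  TwoSidedIdeal.mk' {x | f x = 0}
    (by simpa using hf.2.2.1 0 0)
    (fun {x y} hx hy => le_antisymm ((hf.2.1 x y).trans (by simp [hx.out, hy.out])) (hf.1 _))
    (fun {x} hx => by
      show f (-x) = 0
      rw [← neg_one_smul ℂ x, hf.2.2.1]
      simp [hx.out])
    (fun {y x} hx => le_antisymm ((hf.2.2.2.1 y x).trans (by simp [hx.out])) (hf.1 _))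
    (fun {x y} hx => le_antisymm ((hf.2.2.2.1 x y).trans (by simp [hx.out])) (hf.1 _))

theorem mem_ker (hf : IsCstarSeminorm f) {x : R} : x ∈ hf.ker ↔ f x = 0 :=
  TwoSidedIdeal.mem_mk' _ _ _ _ _ _ x

end IsCstarSeminorm

theorem cstarSeminorm_is_norm_of_simple_factors_general
    (A B : Type*) [CStarAlgebra A] [CStarAlgebra B]
    (hA : IsSimpleRing A)
    (f : AlgTensor A B → ℝ) (hf : IsCstarSeminorm f)
    (hfB : ∀ b : B, b ≠ 0 → 0 < f ((1 : A) ⊗ₜ[ℂ] b)) :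
    ∀ x : AlgTensor A B, x ≠ 0 → 0 < f x := by
  have := Algebra.IsCentral.of_isSimpleRing A
  intro x hx
  refine (hf.1 x).lt_of_ne' fun hfx => ?_
  obtain ⟨b, hb, hbI⟩ := hf.ker.exists_one_tmul_mem (hf.mem_ker.2 hfx) hx
  exact (hfB b hb).ne' (hf.mem_ker.1 hbI)

/-- **Statement 9.** Let `A` and `B` be unital complex C*-algebras which are simple as rings,
and let `f` be a C*-seminorm on the algebraic tensor product `A ⊗[ℂ] B` which is nonzero on
nonzero elements of the form `a ⊗ 1` and `1 ⊗ b`. Then `f` is a C*-norm. -/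
theorem cstarSeminorm_is_norm_of_simple_factors
    (A B : Type*) [CStarAlgebra A] [CStarAlgebra B] [StarModule ℂ A] [StarModule ℂ B]
    (hA : IsSimpleRing A) (hB : IsSimpleRing B)
    (f : AlgTensor A B → ℝ) (hf : IsCstarSeminorm f)
    (hfA : ∀ a : A, a ≠ 0 → 0 < f (a ⊗ₜ[ℂ] (1 : B)))
    (hfB : ∀ b : B, b ≠ 0 → 0 < f ((1 : A) ⊗ₜ[ℂ] b)) :
    ∀ x : AlgTensor A B, x ≠ 0 → 0 < f x :=
  cstarSeminorm_is_norm_of_simple_factors_general A B hA f hf hfB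
end

section
/- Let X be a metric space, let ε > 0 and let η > 0 satisfy 2η < ε. Let 𝓕 ⊆ X be a subset of cardinality 2^ℵ₀ such that dist(E, F) ≥ ε for all distinct E, F ∈ 𝓕. Suppose that to each E ∈ 𝓕 is assigned a separable subset C(E) ⊆ X with E ∈ C(E). Then there exists a subset 𝓕' ⊆ 𝓕 of cardinality 2^ℵ₀ such that for all distinct E, F ∈ 𝓕', max( infDist(E, C(F)), infDist(F, C(E)) ) > η, where infDist(x, S) = inf_{y∈S} dist(x, y). -/
set_option synthInstance.maxHeartbeats 1000000
set_option maxHeartbeats 1000000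

/-- **Statement 12.** Given a `2 ^ ℵ₀`-sized `ε`-separated family `𝓕` in a metric space, and a
separable set `C E ∋ E` attached to each `E ∈ 𝓕`, one can find a subfamily `𝓕'` of cardinality
`2 ^ ℵ₀` such that distinct members of `𝓕'` stay at distance `> η` from each other's attached
separable sets (where `2 * η < ε`). -/
theorem exists_continuum_subfamily_far_from_separable_sets
    {X : Type*} [MetricSpace X] {ε η : ℝ} (hε : 0 < ε) (hη : 0 < η) (hηε : 2 * η < ε)
    (𝓕 : Set X) (hcard : Cardinal.mk 𝓕 = Cardinal.continuum)
    (hsepd : ∀ E ∈ 𝓕, ∀ F ∈ 𝓕, E ≠ F → ε ≤ dist E F)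
    (C : X → Set X)
    (hsep : ∀ E ∈ 𝓕, TopologicalSpace.IsSeparable (C E))
    (hmem : ∀ E ∈ 𝓕, E ∈ C E) :
    ∃ 𝓕' ⊆ 𝓕, Cardinal.mk 𝓕' = Cardinal.continuum ∧
      ∀ E ∈ 𝓕', ∀ F ∈ 𝓕', E ≠ F →
        η < max (Metric.infDist E (C F)) (Metric.infDist F (C E)) := by
  classical
  set δ : ℝ := (ε - 2*η)/4 with hδdef
  have hδ : 0 < δ := by rw [hδdef]; linarith
  set S : X → Set X := fun E => {F | F ∈ 𝓕 ∧ Metric.infDist F (C E) ≤ η} with hSdef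
  -- each S E is countable
  have hScount : ∀ E ∈ 𝓕, (S E).Countable := by
    intro E hE
    obtain ⟨c, hc, hcc⟩ := hsep E hE
    have hsub : S E ⊆ ⋃ d ∈ c, {F | F ∈ 𝓕 ∧ dist F d < ε/2} := by
      rintro F ⟨hF, hFd⟩
      have hne : (C E).Nonempty := ⟨E, hmem E hE⟩
      have hlt : Metric.infDist F (C E) < η + δ := lt_of_le_of_lt hFd (by linarith)
      obtain ⟨y, hy, hdy⟩ := (Metric.infDist_lt_iff hne).1 hlt
      obtain ⟨d, hd, hyd⟩ := Metric.mem_closure_iff.1 (hcc hy) δ hδ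
      refine Set.mem_biUnion hd ⟨hF, ?_⟩
      calc dist F d ≤ dist F y + dist y d := dist_triangle _ _ _
        _ < (η + δ) + δ := add_lt_add hdy hyd
        _ = ε/2 := by rw [hδdef]; ring
    refine Set.Countable.mono hsub (hc.biUnion fun d hd => ?_)
    apply Set.Subsingleton.countable
    rintro F ⟨hF, hF2⟩ G ⟨hG, hG2⟩
    by_contra hne
    have hlt : dist F G < ε := by
      calc dist F G ≤ dist F d + dist d G := dist_triangle _ _ _
        _ < ε/2 + ε/2 := add_lt_add hF2 (by rwa [dist_comm])
        _ = ε := by ring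
    linarith [hsepd F hF G hG hne]
  -- independence predicate
  set Indep : Set X → Prop := fun A =>
    ∀ a ∈ A, ∀ b ∈ A, a ≠ b → ¬(b ∈ S a ∧ a ∈ S b) with hIdef
  -- Zorn: maximal independent subset of 𝓕
  obtain ⟨M, hMmax⟩ : ∃ M, Maximal (· ∈ {A | A ⊆ 𝓕 ∧ Indep A}) M := by
    apply zorn_subset
    intro ch hch hchain
    refine ⟨⋃₀ ch, ⟨?_, ?_⟩, fun s hs => Set.subset_sUnion_of_mem hs⟩
    · exact Set.sUnion_subset fun s hs => (hch hs).1
    · rintro a ⟨sa, hsa, ha⟩ b ⟨sb, hsb, hb⟩ hab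
      rcases hchain.total hsa hsb with h | h
      · exact (hch hsb).2 a (h ha) b hb hab
      · exact (hch hsa).2 a ha b (h hb) hab
  obtain ⟨⟨hMsub, hMind⟩, hMmax⟩ := hMmax
  -- every member of 𝓕 is in M or in some S E, E ∈ M
  have hcover : 𝓕 ⊆ M ∪ ⋃ E ∈ M, S E := by
    intro F hF
    by_cases hFM : F ∈ M
    · exact Or.inl hFM
    right
    by_contra hFnot
    have hins : insert F M ∈ {A | A ⊆ 𝓕 ∧ Indep A} := by
      refine ⟨Set.insert_subset hF hMsub, ?_⟩
      rintro a ha b hb hab ⟨hbSa, haSb⟩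
      rcases ha with rfl | ha <;> rcases hb with rfl | hb
      · exact hab rfl
      · exact hFnot (Set.mem_biUnion hb haSb)
      · exact hFnot (Set.mem_biUnion ha hbSa)
      · exact hMind a ha b hb hab ⟨hbSa, haSb⟩
    have := hMmax hins (Set.subset_insert F M)
    exact hFM (this (Set.mem_insert F M))
  -- M has cardinality continuum
  have hMcard : Cardinal.mk M = Cardinal.continuum := by
    have hle : Cardinal.mk M ≤ Cardinal.continuum := by
      rw [← hcard]; exact Cardinal.mk_le_mk_of_subset hMsub
    rcases lt_or_eq_of_le hle with hlt | heq
    · exfalso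
      have hU : Cardinal.mk ↥(⋃ E ∈ M, S E) < Cardinal.continuum := by
        have h1 : Cardinal.mk ↥(⋃ E ∈ M, S E) ≤ Cardinal.mk M * Cardinal.aleph0 := by
          refine le_trans (Cardinal.mk_biUnion_le S M) ?_
          refine mul_le_mul_right (ciSup_le' fun E => ?_) _
          have : (S (E : X)).Countable := hScount E (hMsub E.2)
          exact Cardinal.mk_le_aleph0_iff.2 this.to_subtype
        refine lt_of_le_of_lt h1 ?_
        exact Cardinal.mul_lt_of_lt Cardinal.aleph0_le_continuum hlt
          (Cardinal.aleph0_lt_continuum)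
      have h2 : Cardinal.mk 𝓕 ≤ Cardinal.mk ↥(M ∪ ⋃ E ∈ M, S E) :=
        Cardinal.mk_le_mk_of_subset hcover
      have h3 : Cardinal.mk ↥(M ∪ ⋃ E ∈ M, S E) ≤
          Cardinal.mk M + Cardinal.mk ↥(⋃ E ∈ M, S E) := Cardinal.mk_union_le _ _
      have h4 : Cardinal.mk 𝓕 < Cardinal.continuum :=
        lt_of_le_of_lt (h2.trans h3)
          (Cardinal.add_lt_of_lt Cardinal.aleph0_le_continuum hlt hU)
      rw [hcard] at h4
      exact lt_irrefl _ h4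
    · exact heq
  refine ⟨M, hMsub, hMcard, ?_⟩
  intro E hE F hF hEF
  by_contra hmax
  push_neg at hmax
  rw [max_le_iff] at hmax
  exact hMind E hE F hF hEF ⟨⟨hMsub hF, hmax.2⟩, ⟨hMsub hE, hmax.1⟩⟩
end

section
/- The set of nonprincipal (free) ultrafilters on ℕ has cardinality 2^(2^ℵ₀). -/
set_option synthInstance.maxHeartbeats 1000000
set_option maxHeartbeats 1000000

open scoped Classical

noncomputable section PospisilAux

/-- Countable base set for the independent family. -/
abbrev PospB := Finset ℚ × Finset (Finset ℚ)

/-- The independent family indexed by reals. -/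
def PospX (r : ℝ) : Set PospB :=
  {p : PospB | (p.1.filter (fun q : ℚ => (q : ℝ) < r)) ∈ p.2}

def PospY (f : ℝ → Bool) (r : ℝ) : Set PospB :=
  if f r then PospX r else (PospX r)ᶜ

lemma posp_key (f : ℝ → Bool) (I : Finset ℝ) :
    (⋂ r ∈ I, PospY f r).Infinite := by
  -- choose separating rationals
  have hsep : ∀ p : ℝ × ℝ, ∃ q : ℚ, p.1 < p.2 → p.1 < (q : ℝ) ∧ (q : ℝ) < p.2 := by
    intro p
    by_cases h : p.1 < p.2
    · obtain ⟨q, hq1, hq2⟩ := exists_rat_btwn h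
      exact ⟨q, fun _ => ⟨hq1, hq2⟩⟩
    · exact ⟨0, fun h' => absurd h' h⟩
  choose g hg using hsep
  set s₀ : Finset ℚ := (I ×ˢ I).image g with hs₀
  -- cut function and its injectivity on I
  have cut_inj : ∀ (s : Finset ℚ), s₀ ⊆ s → ∀ r ∈ I, ∀ r' ∈ I, r ≠ r' →
      s.filter (fun q : ℚ => (q : ℝ) < r) ≠ s.filter (fun q : ℚ => (q : ℝ) < r') := by
    intro s hs r hr r' hr' hne
    wlog hlt : r < r' generalizing r r'
    · exact fun h => this r' hr' r hr hne.symm (hne.lt_or_gt.resolve_left hlt) h.symm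
    intro heq
    have hq : g (r, r') ∈ s₀ := Finset.mem_image_of_mem g (Finset.mem_product.2 ⟨hr, hr'⟩)
    obtain ⟨hgg1, hgg2⟩ := hg (r, r') hlt
    have hgg1' : r < ((g (r, r') : ℚ) : ℝ) := hgg1
    have hgg2' : ((g (r, r') : ℚ) : ℝ) < r' := hgg2
    have h1 : g (r, r') ∈ s.filter (fun q : ℚ => (q : ℝ) < r') :=
      Finset.mem_filter.2 ⟨hs hq, hgg2'⟩
    rw [← heq] at h1
    exact absurd (Finset.mem_filter.1 h1).2 (not_lt.2 hgg1'.le)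
  -- the witness element for each superset s of s₀
  set A : Finset ℚ → Finset (Finset ℚ) := fun s =>
    (I.filter (fun r => f r = true)).image
      (fun r => s.filter (fun q : ℚ => (q : ℝ) < r)) with hA
  have hmem : ∀ s : Finset ℚ, s₀ ⊆ s → (s, A s) ∈ ⋂ r ∈ I, PospY f r := by
    intro s hs
    simp only [Set.mem_iInter]
    intro r hr
    by_cases hfr : f r
    · have : (s, A s) ∈ PospX r := by
        simp only [PospX, Set.mem_setOf_eq, hA]
        exact Finset.mem_image_of_mem _ (Finset.mem_filter.2 ⟨hr, hfr⟩)
      simpa [PospY, hfr] using this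
    · have : (s, A s) ∉ PospX r := by
        simp only [PospX, Set.mem_setOf_eq, hA]
        intro hcon
        obtain ⟨r', hr', heq⟩ := Finset.mem_image.1 hcon
        obtain ⟨hr'I, hfr'⟩ := Finset.mem_filter.1 hr'
        have hne : r' ≠ r := by rintro rfl; exact hfr hfr'
        exact cut_inj s hs r' hr'I r hr hne heq
      simpa [PospY, hfr] using this
  -- infinitude via infinitely many supersets
  have hC : ({q : ℚ | q ∉ s₀} : Set ℚ).Infinite := by
    have := (s₀ : Set ℚ).toFinite.infinite_compl
    simpa [Set.compl_def] using this
  have himg : Set.InjOn (fun q : ℚ => ((insert q s₀, A (insert q s₀)) : PospB))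
      {q : ℚ | q ∉ s₀} := by
    intro a ha b hb hab
    have h1 : insert a s₀ = insert b s₀ := congrArg Prod.fst hab
    have : a ∈ insert b s₀ := h1 ▸ Finset.mem_insert_self a s₀
    rcases Finset.mem_insert.1 this with h | h
    · exact h
    · exact absurd h ha
  refine Set.Infinite.mono ?_ (hC.image himg)
  rintro p ⟨q, _, rfl⟩
  exact hmem _ (Finset.subset_insert q s₀)

lemma posp_gen_infinite (f : ℝ → Bool) {t : Set PospB}
    (ht : t ∈ Filter.generate (Set.range (PospY f))) : t.Infinite := by
  obtain ⟨S, hSsub, hSfin, hSt⟩ := Filter.mem_generate_iff.1 ht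
  have hex : ∀ s : S, ∃ r : ℝ, PospY f r = (s : Set PospB) := fun s => hSsub s.2
  choose gr hgr using hex
  haveI : Finite S := hSfin
  have hfin : (Set.range gr).Finite := Set.finite_range gr
  have hsub : (⋂ r ∈ hfin.toFinset, PospY f r) ⊆ ⋂₀ S := by
    intro x hx
    simp only [Set.mem_iInter, Set.Finite.mem_toFinset, Set.mem_range] at hx
    intro s hs
    have := hx (gr ⟨s, hs⟩) ⟨⟨s, hs⟩, rfl⟩
    rwa [hgr ⟨s, hs⟩] at this
  exact (posp_key f hfin.toFinset).mono (hsub.trans hSt)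

lemma posp_exists_ultra (f : ℝ → Bool) :
    ∃ U : Ultrafilter PospB, (↑U : Filter PospB) ≤ Filter.cofinite ∧
      ∀ r : ℝ, PospY f r ∈ U := by
  set G := Filter.cofinite ⊓ Filter.generate (Set.range (PospY f)) with hG
  haveI : G.NeBot := by
    rw [hG, Filter.inf_neBot_iff]
    intro s hs t ht
    have hti : t.Infinite := posp_gen_infinite f ht
    have : (t \ sᶜ).Infinite := hti.diff hs
    obtain ⟨x, hx⟩ := this.nonempty
    exact ⟨x, not_not.1 hx.2, hx.1⟩
  refine ⟨Ultrafilter.of G, ?_, ?_⟩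
  · exact (Ultrafilter.of_le G).trans inf_le_left
  · intro r
    exact (Ultrafilter.of_le G) (Filter.le_def.1 inf_le_right _
      (Filter.mem_generate_of_mem ⟨r, rfl⟩))

end PospisilAux

/-- **Statement 18.** The set of nonprincipal (free) ultrafilters on `ℕ` has cardinality
`2 ^ (2 ^ ℵ₀)`. -/
theorem card_free_ultrafilters_nat :
    Cardinal.mk {U : Ultrafilter ℕ // ∀ n : ℕ, U ≠ pure n} = 2 ^ Cardinal.continuum := by
  haveI : Denumerable PospB := Denumerable.ofEncodableOfInfinite PospB
  let e : PospB ≃ ℕ := Denumerable.eqv PospB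
  apply le_antisymm
  · -- upper bound
    have h1 : Cardinal.mk {U : Ultrafilter ℕ // ∀ n : ℕ, U ≠ pure n}
        ≤ Cardinal.mk (Set (Set ℕ)) := by
      refine Cardinal.mk_le_of_injective (f := fun U => {s | s ∈ (U : {U : Ultrafilter ℕ // ∀ n : ℕ, U ≠ pure n}).1}) ?_
      intro U V h
      have h' : ∀ s, s ∈ (U.1 : Filter ℕ) ↔ s ∈ (V.1 : Filter ℕ) := fun s =>
        Set.ext_iff.1 h s
      exact Subtype.ext (Ultrafilter.coe_injective (Filter.ext h'))
    calc Cardinal.mk {U : Ultrafilter ℕ // ∀ n : ℕ, U ≠ pure n}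
        ≤ Cardinal.mk (Set (Set ℕ)) := h1
      _ = 2 ^ Cardinal.continuum := by
          rw [Cardinal.mk_set, Cardinal.mk_set, Cardinal.mk_nat, Cardinal.two_power_aleph0]
  · -- lower bound
    have hU : ∀ f : ℝ → Bool, ∃ U : Ultrafilter PospB,
        (↑U : Filter PospB) ≤ Filter.cofinite ∧ ∀ r : ℝ, PospY f r ∈ U :=
      posp_exists_ultra
    choose U hUcof hUmem using hU
    -- build the injection
    have hmain : ∀ f : ℝ → Bool, ∀ n : ℕ, (U f).map e ≠ pure n := by
      intro f n h
      have h1 : ({n}ᶜ : Set ℕ) ∈ (U f).map e := by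
        rw [Ultrafilter.mem_map]
        apply hUcof f
        rw [Filter.mem_cofinite, Set.preimage_compl, compl_compl]
        exact (Set.finite_singleton n).preimage e.injective.injOn
      rw [h] at h1
      exact (Ultrafilter.mem_pure.1 h1) rfl
    have hinj : Function.Injective
        (fun f : ℝ → Bool => (⟨(U f).map e, hmain f⟩ :
          {V : Ultrafilter ℕ // ∀ n : ℕ, V ≠ pure n})) := by
      intro f g h
      have hUeq : (U f).map e = (U g).map e := congrArg Subtype.val h
      funext r
      by_contra hne
      have hXf : PospX r ∈ U f ↔ f r = true := by
        constructor
        · intro hx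
          by_contra hfr
          have : PospY f r ∈ U f := hUmem f r
          rw [PospY, if_neg (by simpa using hfr)] at this
          exact (Ultrafilter.compl_notMem_iff.2 hx) this
        · intro hfr
          have := hUmem f r
          rwa [PospY, if_pos hfr] at this
      have hXg : PospX r ∈ U g ↔ g r = true := by
        constructor
        · intro hx
          by_contra hgr
          have : PospY g r ∈ U g := hUmem g r
          rw [PospY, if_neg (by simpa using hgr)] at this
          exact (Ultrafilter.compl_notMem_iff.2 hx) this
        · intro hgr
          have := hUmem g r
          rwa [PospY, if_pos hgr] at this
      have hmapiff : ∀ (W : Ultrafilter PospB), PospX r ∈ W ↔ e '' PospX r ∈ W.map e := by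
        intro W
        rw [Ultrafilter.mem_map, Equiv.preimage_image]
      have : (PospX r ∈ U f) ↔ (PospX r ∈ U g) := by
        rw [hmapiff (U f), hmapiff (U g), hUeq]
      rw [hXf, hXg] at this
      exact hne (Bool.coe_iff_coe.mp (by simpa using this))
    calc (2 : Cardinal) ^ Cardinal.continuum
        = Cardinal.mk (ℝ → Bool) := by
          rw [Cardinal.mk_arrow, Cardinal.mk_bool, Cardinal.mk_real]
          simp
      _ ≤ Cardinal.mk {U : Ultrafilter ℕ // ∀ n : ℕ, U ≠ pure n} :=
          Cardinal.mk_le_of_injective hinj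
end
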